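/- arXiv:1801.07325 — 2 statements merged into one kernel-verified Lean document; each statement's English description precedes it below -/
import Mathlib

section
/- Let n ≥ 1, γ ∈ ℝ, 0 < r ≤ π/4, and let y be a point of the open upper hemisphere 𝕊^n_+ = {y ∈ ℝ^{n+1} : ‖y‖ = 1, y_{n+1} > 0} whose geodesic distance to the boundary satisfies d(y, ∂𝕊^n_+) = π/2 − arccos(y_{n+1}) ≥ 2r. Then for all z, z' ∈ 𝕊^n_+ with arccos(y·z) < r and arccos(y·z') < r one has z_{n+1}^{2γ} ≤ (2π)^{2|γ|} · (z'_{n+1})^{2γ}. Equivalently, sup over the geodesic ball B(y,r) of the weight w(z) = z_{n+1}^{2γ} is at most (2π)^{2|γ|} times its infimum over B(y,r). -/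
open Real
open scoped RealInnerProductSpace

lemma norm_proj_aux {E : Type*} [NormedAddCommGroup E] [InnerProductSpace ℝ E]
    (v x : E) (hv : ‖v‖ = 1) (hx : ‖x‖ = 1) :
    ‖x - ⟪x, v⟫ • v‖ = Real.sqrt (1 - ⟪x, v⟫ ^ 2) := by
  have h2 : ‖x - ⟪x, v⟫ • v‖ ^ 2 = 1 - ⟪x, v⟫ ^ 2 := by
    rw [norm_sub_sq_real, real_inner_smul_right, norm_smul, hx, hv]
    simp [mul_pow, sq_abs]; ring
  rw [← Real.sqrt_sq (norm_nonneg _), h2]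

lemma inner_proj_aux {E : Type*} [NormedAddCommGroup E] [InnerProductSpace ℝ E]
    (u v w : E) (hv : ‖v‖ = 1) (a b : ℝ) :
    ⟪u - a • v, w - b • v⟫ = ⟪u, w⟫ - a * ⟪v, w⟫ - b * ⟪u, v⟫ + a * b := by
  have hvv : ⟪v, v⟫ = (1 : ℝ) := by
    rw [real_inner_self_eq_norm_sq, hv]; norm_num
  rw [inner_sub_left, inner_sub_right, inner_sub_right, real_inner_smul_left,
    real_inner_smul_left, real_inner_smul_right, real_inner_smul_right, hvv]
  ring

/-- Cosine form of the spherical triangle inequality for unit vectors. -/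
lemma inner_ge_cos_add {E : Type*} [NormedAddCommGroup E] [InnerProductSpace ℝ E]
    (u v w : E) (hu : ‖u‖ = 1) (hv : ‖v‖ = 1) (hw : ‖w‖ = 1) :
    Real.cos (Real.arccos ⟪u, v⟫ + Real.arccos ⟪v, w⟫) ≤ ⟪u, w⟫ := by
  have hb1 : |⟪u, v⟫| ≤ 1 := by simpa [hu, hv] using abs_real_inner_le_norm u v
  have hb2 : |⟪v, w⟫| ≤ 1 := by simpa [hv, hw] using abs_real_inner_le_norm v w
  rw [Real.cos_add, Real.cos_arccos (abs_le.1 hb1).1 (abs_le.1 hb1).2,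
    Real.cos_arccos (abs_le.1 hb2).1 (abs_le.1 hb2).2, Real.sin_arccos, Real.sin_arccos]
  have hnp := norm_proj_aux v u hv hu
  have hnq := norm_proj_aux v w hv hw
  have hpq := inner_proj_aux u v w hv ⟪u, v⟫ ⟪w, v⟫
  have hCS : -(‖u - ⟪u, v⟫ • v‖ * ‖w - ⟪w, v⟫ • v‖) ≤ ⟪u - ⟪u, v⟫ • v, w - ⟪w, v⟫ • v⟫ :=
    neg_le_of_abs_le (abs_real_inner_le_norm _ _)
  have hcc : ⟪w, v⟫ = ⟪v, w⟫ := real_inner_comm v w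
  rw [hpq, hnp, hnq, hcc] at hCS
  nlinarith [hCS]

/-- Spherical triangle inequality. -/
lemma arccos_inner_triangle {E : Type*} [NormedAddCommGroup E] [InnerProductSpace ℝ E]
    (u v w : E) (hu : ‖u‖ = 1) (hv : ‖v‖ = 1) (hw : ‖w‖ = 1) :
    Real.arccos ⟪u, w⟫ ≤ Real.arccos ⟪u, v⟫ + Real.arccos ⟪v, w⟫ := by
  set α := Real.arccos ⟪u, v⟫
  set β := Real.arccos ⟪v, w⟫
  have hα : 0 ≤ α := Real.arccos_nonneg _
  have hβ : 0 ≤ β := Real.arccos_nonneg _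
  rcases le_or_gt (α + β) π with h | h
  · have h1 : Real.cos (α + β) ≤ ⟪u, w⟫ := inner_ge_cos_add u v w hu hv hw
    have hmono : Real.arccos ⟪u, w⟫ ≤ Real.arccos (Real.cos (α + β)) := by
      unfold Real.arccos
      have := Real.monotone_arcsin h1
      linarith
    calc Real.arccos ⟪u, w⟫ ≤ Real.arccos (Real.cos (α + β)) := hmono
      _ = α + β := Real.arccos_cos (by linarith) h
  · exact le_trans (Real.arccos_le_pi _) h.le


/-- Comparability of the weight `w(z) = z_{n+1}^{2γ}` on geodesic balls of the upper
hemisphere `𝕊^n_+` that are well inside: if `d(y, ∂𝕊^n_+) = π/2 − arccos(y_{n+1}) ≥ 2r`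
with `0 < r ≤ π/4`, then for `z, z'` in the geodesic ball `B(y,r)` one has
`z_{n+1}^{2γ} ≤ (2π)^{2|γ|} (z'_{n+1})^{2γ}`. -/
theorem stmt14 (n : ℕ) (hn : 1 ≤ n) (γ r : ℝ) (hr0 : 0 < r) (hr : r ≤ π / 4)
    (y : EuclideanSpace ℝ (Fin (n + 1))) (hy : ‖y‖ = 1) (hy' : 0 < y (Fin.last n))
    (hdist : 2 * r ≤ π / 2 - Real.arccos (y (Fin.last n)))
    (z : EuclideanSpace ℝ (Fin (n + 1))) (hz : ‖z‖ = 1) (hz' : 0 < z (Fin.last n))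
    (z' : EuclideanSpace ℝ (Fin (n + 1))) (hz2 : ‖z'‖ = 1) (hz2' : 0 < z' (Fin.last n))
    (hdz : Real.arccos ⟪y, z⟫ < r) (hdz' : Real.arccos ⟪y, z'⟫ < r) :
    (z (Fin.last n)) ^ (2 * γ) ≤ (2 * π) ^ (2 * |γ|) * (z' (Fin.last n)) ^ (2 * γ) := by

  have hπ : 0 < π := Real.pi_pos
  set e : EuclideanSpace ℝ (Fin (n + 1)) := EuclideanSpace.single (Fin.last n) 1 with he
  have hne : ‖e‖ = 1 := by simp [he]
  have hey : ⟪e, y⟫ = y (Fin.last n) := by simp [he, EuclideanSpace.inner_single_left]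
  set A := Real.arccos (y (Fin.last n)) with hA
  have hA0 : 0 ≤ A := Real.arccos_nonneg _
  have hAr : A ≤ π / 2 - 2 * r := by linarith
  -- bounds on the last coordinates
  have key : ∀ ζ : EuclideanSpace ℝ (Fin (n + 1)), ‖ζ‖ = 1 →
      Real.arccos ⟪y, ζ⟫ < r →
      Real.cos (A + r) ≤ ζ (Fin.last n) ∧ ζ (Fin.last n) ≤ 1 ∧
        (r ≤ A → ζ (Fin.last n) ≤ Real.cos (A - r)) := by
    intro ζ hζ hdζ
    have heζ : ⟪e, ζ⟫ = ζ (Fin.last n) := by simp [he, EuclideanSpace.inner_single_left]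
    have hbζ : |⟪e, ζ⟫| ≤ 1 := by simpa [hne, hζ] using abs_real_inner_le_norm e ζ
    have t1 : Real.arccos ⟪e, ζ⟫ ≤ A + Real.arccos ⟪y, ζ⟫ := by
      have h := arccos_inner_triangle e y ζ hne hy hζ
      rwa [hey] at h
    have t2 : A ≤ Real.arccos ⟪e, ζ⟫ + Real.arccos ⟪y, ζ⟫ := by
      have h := arccos_inner_triangle e ζ y hne hζ hy
      rw [hey, ← real_inner_comm ζ y] at h
      exact h
    have hθ0 : 0 ≤ Real.arccos ⟪e, ζ⟫ := Real.arccos_nonneg _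
    have hθπ : Real.arccos ⟪e, ζ⟫ ≤ π := Real.arccos_le_pi _
    have hcosθ : Real.cos (Real.arccos ⟪e, ζ⟫) = ζ (Fin.last n) := by
      rw [Real.cos_arccos (abs_le.1 hbζ).1 (abs_le.1 hbζ).2, heζ]
    refine ⟨?_, ?_, ?_⟩
    · rw [← hcosθ]
      exact Real.cos_le_cos_of_nonneg_of_le_pi hθ0 (by linarith) (by linarith)
    · rw [← heζ]; exact (abs_le.1 hbζ).2
    · intro hrA
      rw [← hcosθ]
      exact Real.cos_le_cos_of_nonneg_of_le_pi (by linarith) hθπ (by linarith)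
  -- comparison of the cosine bounds
  set a := π / 2 - A with ha
  have ha2 : 2 * r ≤ a := by linarith
  have haπ : a ≤ π / 2 := by linarith
  have e2 : Real.cos (A + r) = Real.sin (a - r) := by
    rw [← Real.sin_pi_div_two_sub (A + r)]
    congr 1
    rw [ha]; ring
  have s2 : 2 / π * (a - r) ≤ Real.sin (a - r) :=
    Real.mul_le_sin (by linarith) (by linarith)
  have hratio : r ≤ A → Real.cos (A - r) ≤ 2 * π * Real.cos (A + r) := by
    intro hrA
    have e1 : Real.cos (A - r) = Real.sin (a + r) := by
      rw [← Real.sin_pi_div_two_sub (A - r)]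
      congr 1
      rw [ha]; ring
    have s1 : Real.sin (a + r) ≤ a + r := Real.sin_le (by linarith)
    have s3 : a + r ≤ 2 * π * (2 / π * (a - r)) := by
      have : 2 * π * (2 / π * (a - r)) = 4 * (a - r) := by field_simp; ring
      rw [this]; linarith
    calc Real.cos (A - r) = Real.sin (a + r) := e1
      _ ≤ 2 * π * (2 / π * (a - r)) := le_trans s1 s3
      _ ≤ 2 * π * Real.sin (a - r) := by
          apply mul_le_mul_of_nonneg_left s2 (by positivity)
      _ = 2 * π * Real.cos (A + r) := by rw [e2]
  have hratio2 : A < r → (1 : ℝ) ≤ 2 * π * Real.cos (A + r) := by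
    intro hrA
    have har : π / 8 ≤ a - r := by linarith
    have s4 : (1 : ℝ) / 4 ≤ Real.sin (a - r) := by
      have : 2 / π * (π / 8) ≤ 2 / π * (a - r) := by
        apply mul_le_mul_of_nonneg_left har (by positivity)
      have h8 : 2 / π * (π / 8) = 1 / 4 := by field_simp; ring
      linarith
    rw [e2]
    nlinarith [Real.pi_gt_three]
  obtain ⟨l1, u1, u1'⟩ := key z hz hdz
  obtain ⟨l2, u2, u2'⟩ := key z' hz2 hdz'
  have h1 : z (Fin.last n) ≤ 2 * π * z' (Fin.last n) := by
    have hstep : z (Fin.last n) ≤ 2 * π * Real.cos (A + r) := by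
      rcases le_or_gt r A with hrA | hrA
      · exact le_trans (u1' hrA) (hratio hrA)
      · exact le_trans u1 (hratio2 hrA)
    calc z (Fin.last n) ≤ 2 * π * Real.cos (A + r) := hstep
      _ ≤ 2 * π * z' (Fin.last n) := mul_le_mul_of_nonneg_left l2 (by positivity)
  have h2 : z' (Fin.last n) ≤ 2 * π * z (Fin.last n) := by
    have hstep : z' (Fin.last n) ≤ 2 * π * Real.cos (A + r) := by
      rcases le_or_gt r A with hrA | hrA
      · exact le_trans (u2' hrA) (hratio hrA)
      · exact le_trans u2 (hratio2 hrA)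
    calc z' (Fin.last n) ≤ 2 * π * Real.cos (A + r) := hstep
      _ ≤ 2 * π * z (Fin.last n) := mul_le_mul_of_nonneg_left l1 (by positivity)
  rcases le_or_gt 0 γ with hγ | hγ
  · rw [abs_of_nonneg hγ]
    calc (z (Fin.last n)) ^ (2 * γ)
        ≤ (2 * π * z' (Fin.last n)) ^ (2 * γ) :=
          Real.rpow_le_rpow hz'.le h1 (by linarith)
      _ = (2 * π) ^ (2 * γ) * (z' (Fin.last n)) ^ (2 * γ) :=
          Real.mul_rpow (by positivity) hz2'.le
  · rw [abs_of_neg hγ]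
    have hd : z' (Fin.last n) / (2 * π) ≤ z (Fin.last n) := by
      rw [div_le_iff₀ (by positivity)]
      linarith [h2]
    have hpos : 0 < z' (Fin.last n) / (2 * π) := by positivity
    calc (z (Fin.last n)) ^ (2 * γ)
        ≤ (z' (Fin.last n) / (2 * π)) ^ (2 * γ) :=
          Real.rpow_le_rpow_of_nonpos hpos hd (by linarith)
      _ = (z' (Fin.last n)) ^ (2 * γ) / (2 * π) ^ (2 * γ) :=
          Real.div_rpow hz2'.le (by positivity) _
      _ = (2 * π) ^ (2 * -γ) * (z' (Fin.last n)) ^ (2 * γ) := by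
          rw [show (2 : ℝ) * -γ = -(2 * γ) by ring, Real.rpow_neg (by positivity)]
          rw [div_eq_mul_inv, mul_comm]
end

section
/- Let n ≥ 1 and κ_1,…,κ_{n+1} ∈ ℝ. There exists a constant c > 0 (one may take c = (2π)^{4(|κ_1|+⋯+|κ_{n+1}|)}) such that for every 0 < r ≤ π/4 and every point y of the open spherical octant 𝕊^n_T = {y ∈ ℝ^{n+1} : ‖y‖ = 1, y_i > 0 for all i} satisfying d(y, ∂𝕊^n_T) ≥ 2r, and for all z, z' ∈ 𝕊^n_T with arccos(y·z) < r and arccos(y·z') < r: Π_{i=1}^{n+1} z_i^{2κ_i} ≤ c · Π_{i=1}^{n+1} (z'_i)^{2κ_i}. -/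
open Real
open scoped RealInnerProductSpace

private lemma coord_sq_le {m : ℕ} (x : EuclideanSpace ℝ (Fin m)) (i : Fin m) :
    (x i) ^ 2 ≤ ‖x‖ ^ 2 := by
  rw [EuclideanSpace.norm_eq, Real.sq_sqrt (by positivity)]
  simp only [Real.norm_eq_abs, sq_abs]
  exact Finset.single_le_sum (f := fun j => (x j) ^ 2) (fun j _ => by positivity)
    (Finset.mem_univ i)

private lemma close_coord {m : ℕ} {y z : EuclideanSpace ℝ (Fin m)} {r : ℝ}
    (hy : ‖y‖ = 1) (hz : ‖z‖ = 1) (hr : 0 < r) (h : Real.arccos ⟪y, z⟫ < r) (i : Fin m) :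
    y i - r < z i ∧ z i < y i + r := by
  have hin : |⟪y, z⟫| ≤ 1 := by
    have := abs_real_inner_le_norm y z
    rwa [hy, hz, one_mul] at this
  rw [abs_le] at hin
  set θ := Real.arccos ⟪y, z⟫ with hθ
  have hθ0 : 0 ≤ θ := Real.arccos_nonneg _
  have hcos : Real.cos θ = ⟪y, z⟫ := Real.cos_arccos hin.1 hin.2
  have h2 : 1 - θ ^ 2 / 2 ≤ Real.cos θ := Real.one_sub_sq_div_two_le_cos
  have hnorm : ‖z - y‖ ^ 2 = 2 - 2 * ⟪y, z⟫ := by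
    rw [norm_sub_sq_real, hy, hz, real_inner_comm]; ring
  have hsq : (z i - y i) ^ 2 < r ^ 2 := by
    have h3 : ((z - y) i) ^ 2 ≤ ‖z - y‖ ^ 2 := coord_sq_le (z - y) i
    have h4 : (z - y) i = z i - y i := rfl
    rw [h4] at h3
    nlinarith
  constructor <;> nlinarith

private lemma rcomp {C x u : ℝ} (hC : 1 ≤ C) (hx : 0 < x) (hu : 0 < u)
    (h1 : x ≤ C * u) (h2 : u ≤ C * x) (t : ℝ) : x ^ t ≤ C ^ |t| * u ^ t := by
  have hC0 : (0 : ℝ) < C := lt_of_lt_of_le one_pos hC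
  rcases le_or_gt 0 t with ht | ht
  · rw [abs_of_nonneg ht]
    calc x ^ t ≤ (C * u) ^ t := Real.rpow_le_rpow hx.le h1 ht
      _ = C ^ t * u ^ t := Real.mul_rpow hC0.le hu.le
  · rw [abs_of_neg ht]
    have h3 : u / C ≤ x := (div_le_iff₀ hC0).2 (by linarith [h2])
    calc x ^ t ≤ (u / C) ^ t :=
          Real.rpow_le_rpow_of_nonpos (by positivity) h3 ht.le
      _ = u ^ t / C ^ t := Real.div_rpow hu.le hC0.le t
      _ = C ^ (-t) * u ^ t := by
          rw [Real.rpow_neg hC0.le, div_eq_inv_mul]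

/-- Comparability of the weight `w(z) = Π_{i=1}^{n+1} z_i^{2κ_i}` on geodesic balls of the
spherical octant `𝕊^n_T ⊂ ℝ^{n+1}` that are well inside the octant: there is a constant
`c > 0` (one may take `c = (2π)^{4(|κ_1|+⋯+|κ_{n+1}|)}`) such that whenever `0 < r ≤ π/4`,
`y ∈ 𝕊^n_T` satisfies `d(y, ∂𝕊^n_T) = min_i (π/2 − arccos(y_i)) ≥ 2r`, and
`z, z' ∈ 𝕊^n_T` lie in the geodesic ball `B(y,r)`, one has
`Π_i z_i^{2κ_i} ≤ c Π_i (z'_i)^{2κ_i}`. -/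
theorem stmt15 (n : ℕ) (hn : 1 ≤ n) (κ : Fin (n + 1) → ℝ) :
    ∃ c > (0 : ℝ),
      ∀ r : ℝ, 0 < r → r ≤ π / 4 →
      ∀ y : EuclideanSpace ℝ (Fin (n + 1)), ‖y‖ = 1 → (∀ i, 0 < y i) →
        (∀ i : Fin (n + 1), 2 * r ≤ π / 2 - Real.arccos (y i)) →
      ∀ z : EuclideanSpace ℝ (Fin (n + 1)), ‖z‖ = 1 → (∀ i, 0 < z i) →
        Real.arccos ⟪y, z⟫ < r →
      ∀ z' : EuclideanSpace ℝ (Fin (n + 1)), ‖z'‖ = 1 → (∀ i, 0 < z' i) →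
        Real.arccos ⟪y, z'⟫ < r →
        (∏ i : Fin (n + 1), (z i) ^ (2 * κ i))
          ≤ c * ∏ i : Fin (n + 1), (z' i) ^ (2 * κ i) := by
  have hpi : (3 : ℝ) < π := Real.pi_gt_three
  have hpi4 : π < 3.15 := Real.pi_lt_d2
  set C : ℝ := (4 + π) / (4 - π) with hCdef
  have hC1 : 1 ≤ C := by
    rw [le_div_iff₀ (by linarith)]; linarith
  have hC0 : (0 : ℝ) < C := lt_of_lt_of_le one_pos hC1
  refine ⟨∏ i : Fin (n + 1), C ^ |2 * κ i|, Finset.prod_pos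
    (fun i _ => Real.rpow_pos_of_pos hC0 _), ?_⟩
  intro r hr hr4 y hy hy0 hyb z hz hz0 hzr z' hz' hz'0 hz'r
  -- key per-coordinate comparability
  have key : ∀ i, z i ≤ C * z' i ∧ z' i ≤ C * z i := by
    intro i
    have hyi1 : |y i| ≤ 1 := by
      have := coord_sq_le y i; rw [hy] at this
      nlinarith [abs_nonneg (y i), sq_abs (y i)]
    rw [abs_le] at hyi1
    have harc : Real.arccos (y i) ≤ π / 2 - 2 * r := by linarith [hyb i]
    have hylb : Real.sin (2 * r) ≤ y i := by
      have h1 : Real.cos (π / 2 - 2 * r) ≤ Real.cos (Real.arccos (y i)) :=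
        Real.cos_le_cos_of_nonneg_of_le_pi (Real.arccos_nonneg _) (by linarith) harc
      rw [Real.cos_arccos hyi1.1 hyi1.2, Real.cos_pi_div_two_sub] at h1
      exact h1
    have hsin : 2 / π * (2 * r) ≤ Real.sin (2 * r) :=
      Real.mul_le_sin (by linarith) (by linarith)
    have hry : 4 * r ≤ π * y i := by
      rw [div_mul_eq_mul_div, div_le_iff₀ (by linarith)] at hsin
      nlinarith
    obtain ⟨hz1, hz2⟩ := close_coord hy hz hr hzr i
    obtain ⟨hz'1, hz'2⟩ := close_coord hy hz' hr hz'r i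
    constructor
    · rw [hCdef, div_mul_eq_mul_div, le_div_iff₀ (by linarith)]
      nlinarith
    · rw [hCdef, div_mul_eq_mul_div, le_div_iff₀ (by linarith)]
      nlinarith
  calc (∏ i : Fin (n + 1), (z i) ^ (2 * κ i))
      ≤ ∏ i : Fin (n + 1), C ^ |2 * κ i| * (z' i) ^ (2 * κ i) := by
        apply Finset.prod_le_prod
        · intro i _; exact Real.rpow_nonneg (hz0 i).le _
        · intro i _
          exact rcomp hC1 (hz0 i) (hz'0 i) (key i).1 (key i).2 _
    _ = (∏ i : Fin (n + 1), C ^ |2 * κ i|) * ∏ i : Fin (n + 1), (z' i) ^ (2 * κ i) :=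
        Finset.prod_mul_distrib
end
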